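/- Let n ≥ 1 be an integer and let α > 0, β > 0, c > 0, η > 0. There exists a constant C > 0 such that for all t > 0 and all D > 0, ∫₀^∞ s^{-n/2} e^{-cD/s} ( ∫₀^∞ e^{-η s w} (t w)^α / (1 + (t w)^β) dw ) ds ≤ C t^{-n/2} (t/D)^{n/2 + α}. -/

import Mathlib

/-!
Since `(tw)^α / (1 + (tw)^β) ≤ (tw)^α`, the inner integral is at most the Gamma integral
`t^α ∫₀^∞ w^α e^{-ηsw} dw = Γ(α+1) t^α (ηs)^{-(α+1)}`. The outer integral then becomes
`∫₀^∞ s^{-(q+1)} e^{-cD/s} ds` with `q = n/2 + α`, which the substitution `s ↦ 1/s` turns into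
the Gamma integral `Γ(q) (cD)^{-q}`; and `t^α D^{-q} = t^{-n/2} (t/D)^q`.
-/

open MeasureTheory Set Real

theorem lintegral_rpow_mul_exp_neg_mul_Ioi {a r : ℝ} (ha : 0 < a) (hr : 0 < r) :
    ∫⁻ x in Ioi (0:ℝ), ENNReal.ofReal (x ^ (a - 1) * exp (-(r * x))) =
      ENNReal.ofReal ((1 / r) ^ a * Gamma a) := by
  rw [← integral_rpow_mul_exp_neg_mul_Ioi ha hr, ofReal_integral_eq_lintegral_ofReal]
  · simpa [rpow_one, neg_mul, IntegrableOn] using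
      integrableOn_rpow_mul_exp_neg_mul_rpow (p := 1) (by linarith) zero_lt_one hr
  · filter_upwards [ae_restrict_mem measurableSet_Ioi] with x (hx : 0 < x)
    positivity

theorem image_inv_Ioi_zero : (fun x : ℝ => x⁻¹) '' Ioi 0 = Ioi 0 := by
  rw [image_inv_eq_inv]; ext x; simp

theorem lintegral_rpow_neg_mul_exp_neg_div_Ioi {p A : ℝ} (hp : 1 < p) (hA : 0 < A) :
    ∫⁻ x in Ioi (0:ℝ), ENNReal.ofReal (x ^ (-p) * exp (-(A / x))) =
      ENNReal.ofReal ((1 / A) ^ (p - 1) * Gamma (p - 1)) := by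
  rw [← lintegral_rpow_mul_exp_neg_mul_Ioi (sub_pos.2 hp) hA]
  conv_rhs => rw [← image_inv_Ioi_zero, lintegral_image_eq_lintegral_abs_deriv_mul
    measurableSet_Ioi (fun x (hx : 0 < x) => (hasDerivAt_inv hx.ne').hasDerivWithinAt)
    (fun x _ y _ hxy => inv_injective hxy)]
  refine setLIntegral_congr_fun measurableSet_Ioi fun x (hx : 0 < x) => ?_
  rw [← ENNReal.ofReal_mul (abs_nonneg _), abs_neg, abs_of_pos (by positivity),
    inv_rpow hx.le, ← rpow_neg hx.le, ← rpow_neg_one, ← rpow_natCast, ← rpow_mul hx.le,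
    ← mul_assoc, ← rpow_add hx, div_eq_inv_mul, mul_comm A]
  congr 3
  push_cast
  ring

theorem lintegral_exp_neg_mul_mul_rpow_div_one_add_rpow_le {α β r t : ℝ} (hα : -1 < α)
    (hr : 0 < r) (ht : 0 ≤ t) :
    ∫⁻ w in Ioi (0:ℝ), ENNReal.ofReal (exp (-(r * w)) * ((t * w) ^ α / (1 + (t * w) ^ β)))
      ≤ ENNReal.ofReal (t ^ α * ((1 / r) ^ (α + 1) * Gamma (α + 1))) := by
  have hdrop : ∀ w ∈ Ioi (0:ℝ), exp (-(r * w)) * ((t * w) ^ α / (1 + (t * w) ^ β))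
      ≤ t ^ α * (w ^ (α + 1 - 1) * exp (-(r * w))) := fun w (hw : 0 < w) => by
    have hpow : 0 ≤ (t * w) ^ β := by positivity
    calc exp (-(r * w)) * ((t * w) ^ α / (1 + (t * w) ^ β))
        ≤ exp (-(r * w)) * (t * w) ^ α := by
          gcongr; exact div_le_self (by positivity) (by linarith)
      _ = t ^ α * (w ^ (α + 1 - 1) * exp (-(r * w))) := by
          rw [add_sub_cancel_right, mul_rpow ht hw.le]; ring
  calc _ ≤ ∫⁻ w in Ioi (0:ℝ), ENNReal.ofReal (t ^ α * (w ^ (α + 1 - 1) * exp (-(r * w)))) :=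
        setLIntegral_mono' measurableSet_Ioi fun w hw => ENNReal.ofReal_le_ofReal (hdrop w hw)
    _ = _ := by
        simp_rw [ENNReal.ofReal_mul (rpow_nonneg ht α)]
        rw [lintegral_const_mul' _ _ ENNReal.ofReal_ne_top,
          lintegral_rpow_mul_exp_neg_mul_Ioi (by linarith) hr]

theorem rpow_neg_mul_one_div_mul_rpow {s η p a : ℝ} (hs : 0 < s) (hη : 0 ≤ η) :
    s ^ (-p) * (1 / (η * s)) ^ a = (1 / η) ^ a * s ^ (-(p + a)) := by
  rw [← one_div_mul_one_div, mul_rpow (by positivity) (by positivity), one_div s, inv_rpow hs.le,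
    ← rpow_neg hs.le, neg_add, rpow_add hs]
  ring

theorem lintegral_rpow_neg_mul_exp_neg_div_mul_lintegral_le {p α β A η t : ℝ} (hpα : 0 < p + α)
    (hα : -1 < α) (hA : 0 < A) (hη : 0 < η) (ht : 0 ≤ t) :
    ∫⁻ s in Ioi (0:ℝ), ENNReal.ofReal (s ^ (-p) * exp (-A / s)) *
        ∫⁻ w in Ioi (0:ℝ),
          ENNReal.ofReal (exp (-(η * s * w)) * ((t * w) ^ α / (1 + (t * w) ^ β)))
      ≤ ENNReal.ofReal (t ^ α * (1 / η) ^ (α + 1) * Gamma (α + 1) *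
          ((1 / A) ^ (p + α) * Gamma (p + α))) := by
  have hΓ : 0 < Gamma (α + 1) := Gamma_pos_of_pos (by linarith)
  set K := t ^ α * (1 / η) ^ (α + 1) * Gamma (α + 1)
  have hK : 0 ≤ K := by positivity
  have hpointwise : ∀ s ∈ Ioi (0:ℝ),
      ENNReal.ofReal (s ^ (-p) * exp (-A / s)) *
        ∫⁻ w in Ioi (0:ℝ),
          ENNReal.ofReal (exp (-(η * s * w)) * ((t * w) ^ α / (1 + (t * w) ^ β)))
      ≤ ENNReal.ofReal K * ENNReal.ofReal (s ^ (-(p + α + 1)) * exp (-(A / s))) :=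
    fun s (hs : 0 < s) => calc
      _ ≤ ENNReal.ofReal (s ^ (-p) * exp (-A / s)) *
            ENNReal.ofReal (t ^ α * ((1 / (η * s)) ^ (α + 1) * Gamma (α + 1))) := by
          gcongr
          exact lintegral_exp_neg_mul_mul_rpow_div_one_add_rpow_le hα (by positivity) ht
      _ = _ := by
          rw [← ENNReal.ofReal_mul (by positivity), ← ENNReal.ofReal_mul hK, neg_div s A,
            add_assoc p]
          congr 1
          simp only [K]
          linear_combination (exp (-(A / s)) * t ^ α * Gamma (α + 1)) *
            rpow_neg_mul_one_div_mul_rpow (p := p) (a := α + 1) hs hη.le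
  calc _ ≤ ∫⁻ s in Ioi (0:ℝ),
          ENNReal.ofReal K * ENNReal.ofReal (s ^ (-(p + α + 1)) * exp (-(A / s))) :=
        setLIntegral_mono' measurableSet_Ioi hpointwise
    _ = _ := by
        rw [lintegral_const_mul' _ _ ENNReal.ofReal_ne_top,
          lintegral_rpow_neg_mul_exp_neg_div_Ioi (by linarith) hA, add_sub_cancel_right,
          ← ENNReal.ofReal_mul hK]

theorem stmt_1 (n : ℕ) (α β c η : ℝ)
    (hα : 0 < α) (hc : 0 < c) (hη : 0 < η) :
    ∃ C > 0, ∀ t > (0:ℝ), ∀ D > (0:ℝ),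
      (∫⁻ s in Ioi (0:ℝ),
        ENNReal.ofReal (s ^ (-(n:ℝ)/2) * Real.exp (-(c * D) / s)) *
          ∫⁻ w in Ioi (0:ℝ),
            ENNReal.ofReal (Real.exp (-(η * s * w)) * ((t * w) ^ α / (1 + (t * w) ^ β))))
      ≤ ENNReal.ofReal (C * t ^ (-(n:ℝ)/2) * (t / D) ^ ((n:ℝ)/2 + α)) := by
  set q : ℝ := (n:ℝ)/2 + α with hq
  refine ⟨Gamma (α + 1) * (1 / η) ^ (α + 1) * (Gamma q * (1 / c) ^ q), by positivity,
    fun t ht D hD => ?_⟩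
  have hbound := lintegral_rpow_neg_mul_exp_neg_div_mul_lintegral_le (p := (n:ℝ)/2) (β := β)
    (by positivity) (by linarith) (mul_pos hc hD) hη ht.le
  rw [neg_div (2:ℝ) (n:ℝ)]
  refine hbound.trans_eq (congrArg ENNReal.ofReal ?_)
  have ht_pow : t ^ (-((n:ℝ)/2)) * (t / D) ^ q = t ^ α * (1 / D) ^ q := by
    rw [div_eq_mul_one_div t D, mul_rpow ht.le (by positivity), ← mul_assoc, ← rpow_add ht]
    congr 2; rw [hq]; ring
  rw [← one_div_mul_one_div, mul_rpow (by positivity) (by positivity), mul_assoc _ (t ^ _), ht_pow]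
  ring
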